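/- arXiv:1112.3027 — 9 statements merged into one kernel-verified Lean document; each statement's English description precedes it below -/
import Mathlib

section
/- Let n ≥ 2 be an integer and let α ≥ 0, β ≥ 0, C₀ > 0 be real constants. Let u : [1,∞) → ℝ and f : [1,∞) → ℝ be continuous functions such that |f(r)| ≤ α r + β for all r ≥ 1, and such that for every r ≥ 1 one has u(r) + (1/((n−1) r)) · ( f(r) − f(1) + ∫₁^r u(t) dt )² ≤ (n−1) r + C₀. Then for every r ≥ 1, ∫₁^r u(t) dt ≤ (n−1+α) r + α + 2β + C₀. -/
/-- Analytic core of the weighted volume comparison (Lemma 2.1):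
if `u` satisfies the integro-differential inequality coming from the
Bakry-Émery curvature bound and `f` has linear growth, then the
integral of `u` grows at most linearly. -/
theorem stmt_0 (n : ℕ) (hn : 2 ≤ n) (α β C₀ : ℝ) (hα : 0 ≤ α) (hβ : 0 ≤ β) (hC₀ : 0 < C₀)
    (u f : ℝ → ℝ) (hu : ContinuousOn u (Set.Ici 1)) (hf : ContinuousOn f (Set.Ici 1))
    (hfb : ∀ r ≥ (1 : ℝ), |f r| ≤ α * r + β)
    (h : ∀ r ≥ (1 : ℝ),
      u r + (1 / ((n - 1 : ℝ) * r)) * (f r - f 1 + ∫ t in (1 : ℝ)..r, u t) ^ 2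
        ≤ (n - 1 : ℝ) * r + C₀) :
    ∀ r ≥ (1 : ℝ), (∫ t in (1 : ℝ)..r, u t) ≤ ((n : ℝ) - 1 + α) * r + α + 2 * β + C₀ := by
  intro r₀ hr₀
  by_contra hcon
  push_neg at hcon
  have hn1 : (1 : ℝ) ≤ (n : ℝ) - 1 := by
    have : (2 : ℝ) ≤ (n : ℝ) := by exact_mod_cast hn
    linarith
  set F : ℝ → ℝ := fun r => ∫ t in (1 : ℝ)..r, u t with hFdef
  set M : ℝ → ℝ := fun r => ((n : ℝ) - 1 + α) * r + α + 2 * β + C₀ with hMdef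
  -- integrability of u on subintervals of [1, r₀]
  have huI : ∀ a b : ℝ, a ∈ Set.Icc (1 : ℝ) r₀ → b ∈ Set.Icc (1 : ℝ) r₀ →
      IntervalIntegrable u MeasureTheory.volume a b := by
    intro a b ha hb
    apply (hu.mono ?_).intervalIntegrable
    intro x hx
    have : x ∈ Set.Icc (min a b) (max a b) := by
      simpa [Set.uIcc] using hx
    exact le_trans (le_min ha.1 hb.1) this.1
  -- F is continuous on [1, r₀]
  have hFc : ContinuousOn F (Set.Icc 1 r₀) := by
    have h1 : Set.Icc (1 : ℝ) r₀ = Set.uIcc (1 : ℝ) r₀ := by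
      rw [Set.uIcc_of_le hr₀]
    rw [h1]
    exact intervalIntegral.continuousOn_primitive_interval'
      (huI 1 r₀ (Set.left_mem_Icc.2 hr₀) (Set.right_mem_Icc.2 hr₀)) Set.left_mem_uIcc
  -- the set where F ≤ M
  set S : Set ℝ := Set.Icc 1 r₀ ∩ (fun r => F r - M r) ⁻¹' Set.Iic 0 with hSdef
  have hScl : IsClosed S :=
    (hFc.sub (by fun_prop)).preimage_isClosed_of_isClosed isClosed_Icc isClosed_Iic
  have h1S : (1 : ℝ) ∈ S := by
    constructor
    · exact Set.left_mem_Icc.2 hr₀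
    · simp only [Set.mem_preimage, Set.mem_Iic, hFdef, hMdef]
      have : (∫ t in (1:ℝ)..(1:ℝ), u t) = 0 := intervalIntegral.integral_same
      simp only [this]
      nlinarith
  have hSbdd : BddAbove S := ⟨r₀, fun x hx => hx.1.2⟩
  set s : ℝ := sSup S with hsdef
  have hsS : s ∈ S := hScl.csSup_mem ⟨1, h1S⟩ hSbdd
  have hs1 : 1 ≤ s := hsS.1.1
  have hsr₀ : s ≤ r₀ := hsS.1.2
  have hsFM : F s ≤ M s := by
    have := hsS.2
    simp only [Set.mem_preimage, Set.mem_Iic] at this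
    linarith
  have hsne : s ≠ r₀ := by
    intro he
    rw [he] at hsFM
    exact absurd hsFM (not_le.2 hcon)
  have hslt : s < r₀ := lt_of_le_of_ne hsr₀ hsne
  -- on (s, r₀], F > M, hence u < 0
  have key : ∀ r ∈ Set.Ioc s r₀, u r < 0 := by
    intro r hr
    have hr1 : (1 : ℝ) ≤ r := le_trans hs1 hr.1.le
    have hFM : M r < F r := by
      by_contra hle
      push_neg at hle
      have : r ∈ S := ⟨⟨hr1, hr.2⟩, by simp [Set.mem_preimage, Set.mem_Iic]; linarith⟩
      have := le_csSup hSbdd this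
      exact absurd this (not_le.2 hr.1)
    have hfr := hfb r hr1
    have hf1 := hfb 1 le_rfl
    have hfr' : -(α * r + β) ≤ f r := neg_le_of_abs_le hfr
    have hf1' : f 1 ≤ α * 1 + β := le_of_abs_le hf1
    set G : ℝ := f r - f 1 + F r with hGdef
    have hD : (0 : ℝ) < ((n : ℝ) - 1) * r := by nlinarith
    have hG : ((n : ℝ) - 1) * r + C₀ < G := by
      have : M r - (α * r + α + 2 * β) = ((n : ℝ) - 1) * r + C₀ := by
        simp only [hMdef]; ring
      nlinarith [hFM]
    have hhr := h r hr1
    have hmul : ((n:ℝ) - 1) * r * (u r + (1 / (((n:ℝ) - 1) * r)) * G ^ 2)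
        ≤ ((n:ℝ) - 1) * r * (((n:ℝ) - 1) * r + C₀) :=
      mul_le_mul_of_nonneg_left hhr hD.le
    have hinv : ((n:ℝ) - 1) * r * (1 / (((n:ℝ) - 1) * r)) = 1 := by
      field_simp
    have hG0 : 0 < G := lt_trans (by positivity) hG
    nlinarith [sq_nonneg G, mul_pos hD hC₀, sq_nonneg (G - ((n:ℝ) - 1) * r)]
  -- u s ≤ 0 by continuity from the right
  have hus : u s ≤ 0 := by
    have hcw : ContinuousWithinAt u (Set.Ioc s r₀) s :=
      (hu s hs1).mono (fun x hx => le_trans hs1 hx.1.le)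
    have hne : (nhdsWithin s (Set.Ioc s r₀)).NeBot := by
      apply mem_closure_iff_nhdsWithin_neBot.1
      rw [closure_Ioc hslt.ne]
      exact ⟨le_rfl, hslt.le⟩
    exact le_of_tendsto hcw (Filter.eventually_of_mem self_mem_nhdsWithin
      (fun x hx => (key x hx).le))
  have hu0 : ∀ x ∈ Set.Icc s r₀, u x ≤ 0 := by
    intro x hx
    rcases eq_or_lt_of_le hx.1 with he | hlt
    · rwa [← he]
    · exact (key x ⟨hlt, hx.2⟩).le
  have hint : (∫ t in s..r₀, u t) ≤ 0 := by
    have := intervalIntegral.integral_nonneg (f := fun x => -u x) (μ := MeasureTheory.volume) hslt.le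
      (fun x hx => by simpa using hu0 x hx)
    rw [intervalIntegral.integral_neg] at this
    linarith
  have hadd : F s + (∫ t in s..r₀, u t) = F r₀ :=
    intervalIntegral.integral_add_adjacent_intervals
      (huI 1 s (Set.left_mem_Icc.2 hr₀) ⟨hs1, hsr₀⟩)
      (huI s r₀ ⟨hs1, hsr₀⟩ (Set.right_mem_Icc.2 hr₀))
  have hMmono : M s < M r₀ := by
    simp only [hMdef]
    nlinarith
  have : F r₀ ≤ M s := by linarith
  have : F r₀ < M r₀ := lt_of_le_of_lt this hMmono
  exact absurd hcon (not_lt.2 this.le)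
end

section
/- Let n ≥ 2 be an integer, let A be a real symmetric n×n matrix with entries A_{ij}, and let a ≥ 0 and g ≥ 0 be real numbers such that |tr A| ≤ a·g. Then Σ_{i=1}^n Σ_{j=1}^n A_{ij}² ≥ (n/(n−1)) · Σ_{j=1}^n A_{1j}² − (2 a g/(n−1)) · |A_{11}|. -/
/-- Refined Kato-type inequality for a real symmetric matrix whose trace
is bounded: lower bound of the squared Frobenius norm in terms of the
first row (used for the Hessian of an f-harmonic function). -/
theorem stmt_2 (n : ℕ) (hn : 2 ≤ n) (A : Matrix (Fin n) (Fin n) ℝ) (hA : A.IsSymm)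
    (a g : ℝ) (ha : 0 ≤ a) (hg : 0 ≤ g) (htr : |Matrix.trace A| ≤ a * g) :
    ∑ i, ∑ j, (A i j) ^ 2 ≥
      ((n : ℝ) / ((n : ℝ) - 1)) * ∑ j, (A ⟨0, by omega⟩ j) ^ 2
        - (2 * a * g / ((n : ℝ) - 1)) * |A ⟨0, by omega⟩ ⟨0, by omega⟩| := by
  have hz : (⟨0, by omega⟩ : Fin n) = (⟨0, by omega⟩ : Fin n) := rfl
  set z : Fin n := ⟨0, by omega⟩ with hzdef
  have hn2 : (2:ℝ) ≤ (n:ℝ) := by exact_mod_cast hn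
  have hcpos : (0:ℝ) < (n:ℝ) - 1 := by linarith
  set s := (Finset.univ : Finset (Fin n)).erase z with hs
  have hcard : ((s.card : ℝ)) = (n:ℝ) - 1 := by
    simp only [hs, Finset.card_erase_of_mem (Finset.mem_univ z), Finset.card_univ,
      Fintype.card_fin]
    rw [Nat.cast_sub (by omega), Nat.cast_one]
  set S := ∑ j, (A z j) ^ 2 with hS
  set F := ∑ i, ∑ j, (A i j) ^ 2 with hF
  set T := ∑ i ∈ s, A i i with hT
  set D := ∑ i ∈ s, (A i i) ^ 2 with hD
  -- per-row lower bound for i ∈ s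
  have hrow : ∀ i ∈ s, (A i z)^2 + (A i i)^2 ≤ ∑ j, (A i j)^2 := by
    intro i hi
    have hiz : i ≠ z := Finset.ne_of_mem_erase hi
    have hsub : ({z, i} : Finset (Fin n)) ⊆ Finset.univ := Finset.subset_univ _
    have := Finset.sum_le_sum_of_subset_of_nonneg hsub
      (fun j _ _ => sq_nonneg (A i j))
    rw [Finset.sum_pair (Ne.symm hiz)] at this
    linarith
  have hFdec : S + ∑ i ∈ s, ((A i z)^2 + (A i i)^2) ≤ F := by
    have hmem : z ∈ (Finset.univ : Finset (Fin n)) := Finset.mem_univ z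
    have hsplit : F = (∑ j, (A z j)^2) + ∑ i ∈ s, ∑ j, (A i j)^2 := by
      rw [hF, ← Finset.add_sum_erase _ _ hmem]
    rw [hsplit]
    have := Finset.sum_le_sum hrow
    linarith
  have hsymm : ∑ i ∈ s, (A i z)^2 = S - (A z z)^2 := by
    have h1 : ∑ i ∈ s, (A i z)^2 = ∑ i ∈ s, (A z i)^2 := by
      apply Finset.sum_congr rfl
      intro i _
      rw [hA.apply i z]
    have h2 : S = (A z z)^2 + ∑ i ∈ s, (A z i)^2 := by
      rw [hS, ← Finset.add_sum_erase _ _ (Finset.mem_univ z)]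
    linarith
  have hFkey : 2 * S - (A z z)^2 + D ≤ F := by
    have : ∑ i ∈ s, ((A i z)^2 + (A i i)^2) = (S - (A z z)^2) + D := by
      rw [Finset.sum_add_distrib, hsymm]
    linarith [hFdec, this ▸ hFdec]
  -- Cauchy-Schwarz on the diagonal
  have hCS : T^2 ≤ ((n:ℝ) - 1) * D := by
    have := sq_sum_le_card_mul_sum_sq (s := s) (f := fun i => A i i)
    rw [hcard] at this
    exact this
  -- trace decomposition
  have htrdec : Matrix.trace A = A z z + T := by
    rw [Matrix.trace, hT, ← Finset.add_sum_erase _ _ (Finset.mem_univ z)]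
    rfl
  have habs1 : Matrix.trace A * A z z ≤ a * g * |A z z| := by
    calc Matrix.trace A * A z z ≤ |Matrix.trace A * A z z| := le_abs_self _
      _ = |Matrix.trace A| * |A z z| := abs_mul _ _
      _ ≤ a * g * |A z z| := by
          apply mul_le_mul_of_nonneg_right htr (abs_nonneg _)
  have hT2 : (A z z)^2 - 2*(a*g)*|A z z| ≤ T^2 := by
    have h : T = Matrix.trace A - A z z := by linarith [htrdec]
    have : T^2 = (Matrix.trace A)^2 - 2 * (Matrix.trace A * A z z) + (A z z)^2 := by
      rw [h]; ring
    nlinarith [sq_nonneg (Matrix.trace A)]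
  have hDlb : (A z z)^2 - 2*(a*g)*|A z z| ≤ ((n:ℝ) - 1) * D := by linarith
  have hSA : (A z z)^2 ≤ S := by
    rw [hS]
    exact Finset.single_le_sum (fun j _ => sq_nonneg (A z j)) (Finset.mem_univ z)
  rw [ge_iff_le, div_mul_eq_mul_div, div_mul_eq_mul_div, ← sub_div,
    div_le_iff₀ hcpos]
  nlinarith [hFkey, hDlb, hSA, abs_nonneg (A z z)]
end

section
/- For all real numbers k, γ, α with k ≥ 1, γ ≥ 1 and α ≥ 0, one has α − k·√α·( 1/γ − γ + √(γ²−1) ) + (k² − 1/2)·(1 − 1/γ²) ≥ 0. -/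
/-- The quadratic inequality (p7) in `√α` from the proof of the potential
function estimate for expanding gradient Ricci solitons (Theorem 5.1). -/
theorem stmt_3 (k γ α : ℝ) (hk : 1 ≤ k) (hγ : 1 ≤ γ) (hα : 0 ≤ α) :
    α - k * Real.sqrt α * (1 / γ - γ + Real.sqrt (γ ^ 2 - 1))
      + (k ^ 2 - 1 / 2) * (1 - 1 / γ ^ 2) ≥ 0 := by
  have hγ0 : (0:ℝ) < γ := lt_of_lt_of_le one_pos hγ
  set x := Real.sqrt α with hxdef
  set s := Real.sqrt (γ ^ 2 - 1) with hsdef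
  have hx0 : 0 ≤ x := Real.sqrt_nonneg _
  have hs0 : 0 ≤ s := Real.sqrt_nonneg _
  have hx2 : x ^ 2 = α := Real.sq_sqrt hα
  have hs2 : s ^ 2 = γ ^ 2 - 1 := Real.sq_sqrt (by nlinarith)
  have hsle : s ≤ γ := by
    nlinarith [hs2, hs0]
  have hsge : γ - 1 ≤ s := by
    nlinarith [hs2, hs0, hγ]
  rw [ge_iff_le, ← sub_nonneg, sub_zero]
  have hγ2 : (0:ℝ) < γ ^ 2 := by positivity
  have key : 0 ≤ γ^2 * α - k * x * γ * (s * γ - (γ^2 - 1)) + (k^2 - 1/2) * (γ^2 - 1) := by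
    rw [← hx2, ← hs2]
    nlinarith [sq_nonneg (2 * γ * x - k * s * (γ - s)), sq_nonneg s,
      mul_nonneg hs0 (sub_nonneg.2 hsle), sq_nonneg (k * s * (γ - s)),
      mul_nonneg (mul_nonneg hs0 hs0) (mul_nonneg (sub_nonneg.2 hsle) (sub_nonneg.2 hsle)),
      sq_nonneg (k - 1), sq_nonneg k, hk]
  have h1 : α - k * x * (1 / γ - γ + s) + (k ^ 2 - 1 / 2) * (1 - 1 / γ ^ 2)
      = (γ^2 * α - k * x * γ * (s * γ - (γ^2 - 1)) + (k^2 - 1/2) * (γ^2 - 1)) / γ^2 := by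
    rw [← hx2]
    field_simp
    ring
  rw [h1]
  positivity
end

section
/- For all real numbers k ≥ 1 and γ ≥ 1, one has k² · ( 1/γ − γ + √(γ²−1) )² ≤ 4 · (k² − 1/2) · (1 − 1/γ²). -/
/-!
With `s = √(γ² - 1)` one has `1/γ - γ + s = s (γ - s) / γ` and `s² / γ² = 1 - 1/γ²`, so the left
side equals `(1 - 1/γ²) · k² (γ - s)²`. Since `0 ≤ γ - s ≤ 1` and `k ≥ 1`,
`k² (γ - s)² ≤ k² ≤ 4 (k² - 1/2)`.
-/

namespace Real

lemma sqrt_sq_sub_one_le {γ : ℝ} (hγ : 0 ≤ γ) : √(γ ^ 2 - 1) ≤ γ :=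
  (sqrt_le_sqrt (by linarith)).trans_eq (sqrt_sq hγ)

lemma sub_sqrt_sq_sub_one_le_one {γ : ℝ} (hγ : 1 ≤ γ) : γ - √(γ ^ 2 - 1) ≤ 1 := by
  have : γ - 1 ≤ √(γ ^ 2 - 1) := le_sqrt_of_sq_le (by nlinarith)
  linarith

lemma one_div_sub_add_sqrt_sq_sub_one {γ : ℝ} (hγ : 1 ≤ γ ^ 2) :
    1 / γ - γ + √(γ ^ 2 - 1) = √(γ ^ 2 - 1) * (γ - √(γ ^ 2 - 1)) / γ := by
  have hγ0 : γ ≠ 0 := by rintro rfl; norm_num at hγ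
  have hs : √(γ ^ 2 - 1) ^ 2 = γ ^ 2 - 1 := sq_sqrt (by linarith)
  field_simp
  linear_combination hs

lemma one_div_sub_add_sqrt_sq_sub_one_sq {γ : ℝ} (hγ : 1 ≤ γ ^ 2) :
    (1 / γ - γ + √(γ ^ 2 - 1)) ^ 2 = (1 - 1 / γ ^ 2) * (γ - √(γ ^ 2 - 1)) ^ 2 := by
  have hγ0 : γ ≠ 0 := by rintro rfl; norm_num at hγ
  rw [one_div_sub_add_sqrt_sq_sub_one hγ, div_pow, mul_pow, sq_sqrt (by linarith)]
  field_simp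

end Real

/-- Nonpositivity of the discriminant of the quadratic form appearing in
the proof of Theorem 5.1. -/
theorem stmt_4 (k γ : ℝ) (hk : 1 ≤ k) (hγ : 1 ≤ γ) :
    k ^ 2 * (1 / γ - γ + Real.sqrt (γ ^ 2 - 1)) ^ 2
      ≤ 4 * (k ^ 2 - 1 / 2) * (1 - 1 / γ ^ 2) := by
  have hγ2 : 1 ≤ γ ^ 2 := one_le_pow₀ hγ
  set t := γ - Real.sqrt (γ ^ 2 - 1)
  have ht0 : 0 ≤ t := sub_nonneg.2 (Real.sqrt_sq_sub_one_le (by linarith))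
  have ht1 : t ≤ 1 := Real.sub_sqrt_sq_sub_one_le_one hγ
  have hk2 : 1 ≤ k ^ 2 := one_le_pow₀ hk
  have hfactor : 0 ≤ 1 - 1 / γ ^ 2 := sub_nonneg.2 ((div_le_one (by positivity)).2 hγ2)
  have hbound : k ^ 2 * t ^ 2 ≤ 4 * (k ^ 2 - 1 / 2) :=
    calc k ^ 2 * t ^ 2 ≤ k ^ 2 * 1 := by gcongr; exact pow_le_one₀ ht0 ht1
      _ ≤ 4 * (k ^ 2 - 1 / 2) := by linarith
  rw [Real.one_div_sub_add_sqrt_sq_sub_one_sq hγ2]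
  calc k ^ 2 * ((1 - 1 / γ ^ 2) * t ^ 2) = k ^ 2 * t ^ 2 * (1 - 1 / γ ^ 2) := by ring
    _ ≤ 4 * (k ^ 2 - 1 / 2) * (1 - 1 / γ ^ 2) := by gcongr
end

section
/- For all real numbers k, u, α with k ≥ 1, u > 0 and 0 ≤ α ≤ u, one has k·√u + (k² − 1/2) + α·( 1 − (k² − 1/2)/u − k/√u ) ≥ k·√(u − α). -/
set_option maxHeartbeats 800000 in
/-- The pointwise inequality (p6), in rearranged form, from the proof of
the potential function estimate for expanding gradient Ricci solitons. -/
theorem stmt_5 (k u α : ℝ) (hk : 1 ≤ k) (hu : 0 < u) (hα : 0 ≤ α) (hαu : α ≤ u) :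
    k * Real.sqrt u + (k ^ 2 - 1 / 2)
        + α * (1 - (k ^ 2 - 1 / 2) / u - k / Real.sqrt u)
      ≥ k * Real.sqrt (u - α) := by
  set s := Real.sqrt u with hs
  set t := Real.sqrt (u - α) with ht
  have hs0 : 0 < s := Real.sqrt_pos.mpr hu
  have ht0 : 0 ≤ t := Real.sqrt_nonneg _
  have hs2 : s ^ 2 = u := Real.sq_sqrt hu.le
  have ht2 : t ^ 2 = u - α := Real.sq_sqrt (by linarith)
  have hts : t ≤ s := Real.sqrt_le_sqrt (by linarith)
  have key : (k*s + k^2 - 1/2 - s^2) * t^2 - k*s^2*t + s^4 ≥ 0 := by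
    rcases le_or_gt (k*s + k^2 - 1/2 - s^2) 0 with h | h
    · -- concave case
      have h1 : 0 ≤ (-(k*s + k^2 - 1/2 - s^2)) * (t*(s-t)) :=
        mul_nonneg (by linarith) (mul_nonneg ht0 (by linarith))
      have h2 : 0 ≤ s^3*(s-t) := mul_nonneg (by positivity) (by linarith)
      have h3 : 0 ≤ (k^2-1/2)*(s*t) :=
        mul_nonneg (by nlinarith) (mul_nonneg hs0.le ht0)
      nlinarith [h1, h2, h3]
    · rcases le_or_gt (2*(k*s + k^2 - 1/2 - s^2)) (k*s) with h2 | h2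
      · have hb : 0 ≤ (s-t) * (k*s^2 - (k*s + k^2 - 1/2 - s^2)*(s+t)) := by
          apply mul_nonneg (by linarith)
          have hc : (k*s + k^2 - 1/2 - s^2)*(s+t) ≤ 2*(k*s + k^2 - 1/2 - s^2)*s := by
            nlinarith
          nlinarith [mul_le_mul_of_nonneg_right h2 hs0.le]
        have hc2 : 0 ≤ s^2*(k^2 - 1/2) := mul_nonneg (by positivity) (by nlinarith)
        nlinarith [hb, hc2]
      · have hdisc : k^2 ≤ 4*(k*s + k^2 - 1/2 - s^2) := by
          rcases le_or_gt k (2*s) with h3 | h3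
          · nlinarith
          · nlinarith [mul_pos hs0 (show 0 < k - s by nlinarith)]
        have hApos : 0 < 4*(k*s + k^2 - 1/2 - s^2) := by linarith
        have h4 : (4*(k*s + k^2 - 1/2 - s^2))*((k*s + k^2 - 1/2 - s^2) * t^2 - k*s^2*t + s^4)
            = (2*(k*s + k^2 - 1/2 - s^2)*t - k*s^2)^2
              + s^4*(4*(k*s + k^2 - 1/2 - s^2) - k^2) := by ring
        have h5 : 0 ≤ (2*(k*s + k^2 - 1/2 - s^2)*t - k*s^2)^2
              + s^4*(4*(k*s + k^2 - 1/2 - s^2) - k^2) := by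
          have := mul_nonneg (pow_pos hs0 4).le (sub_nonneg.mpr hdisc)
          have h5a := sq_nonneg (2*(k*s + k^2 - 1/2 - s^2)*t - k*s^2)
          nlinarith [h5a, this]
        have h6 : (4*(k*s + k^2 - 1/2 - s^2))*0
            ≤ (4*(k*s + k^2 - 1/2 - s^2))*((k*s + k^2 - 1/2 - s^2) * t^2 - k*s^2*t + s^4) := by
          rw [mul_zero, h4]; exact h5
        exact ge_iff_le.mpr (le_of_mul_le_mul_left h6 hApos)
  have hu' : u = s^2 := hs2.symm
  have hα' : α = s^2 - t^2 := by rw [hs2, ht2]; ring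
  rw [hu', hα', ge_iff_le, ← sub_nonneg]
  have heq : k * s + (k ^ 2 - 1 / 2) + (s^2 - t^2) * (1 - (k ^ 2 - 1 / 2) / s^2 - k / s)
      - k * t = ((k*s + k^2 - 1/2 - s^2) * t^2 - k*s^2*t + s^4) / s^2 := by
    field_simp; ring
  rw [heq]
  positivity
end

section
/- Let C > 0 and set δ := e^{−C}. Let ε be a real number with 0 < ε < log 2 and set t₀ := 1/ε. Let y : ℝ → (0, ∞) be a differentiable nonincreasing function such that y(t₀) < δ e^{−2} and such that t·y'(t) − 2·y(t)·log y(t) ≤ C·y(t−1) for all t ≥ t₀ + 1. Then y(t) < δ e^{−ε t} for all t ≥ t₀. -/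
/-!
Compare `y` with the barrier `g t = e^{-C} e^{-ε t}`. On `[t₀, t₀ + 1]` the bound `y < g` follows
from monotonicity and `y t₀ < e^{-C-2}`, since `ε t ≤ 1 + ε < 2`. If `y` ever reached `g`, at the
first contact time `s > t₀ + 1` we would have `y' s ≥ g' s = -ε y s`, `log y s = -C - ε s` and
`y (s - 1) < g (s - 1) = e^ε y s < 2 y s`, so that
`s y' - 2 y log y ≥ (ε s + 2C) y s > 2C y s > C y (s - 1)`, contradicting the hypothesis.
-/

open Real Set

theorem exists_first_eq_of_lt_of_le {f g : ℝ → ℝ} {a b : ℝ} (hf : Continuous f)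
    (hg : Continuous g) (ha : f a < g a) (hab : a ≤ b) (hb : g b ≤ f b) :
    ∃ s ∈ Ioc a b, f s = g s ∧ ∀ t ∈ Ico a s, f t < g t := by
  set A : Set ℝ := {t ∈ Ici a | g t ≤ f t}
  have hA_closed : IsClosed A := isClosed_Ici.isClosed_le hg.continuousOn hf.continuousOn
  have hA_bdd : BddBelow A := ⟨a, fun t ht => ht.1⟩
  have hbA : b ∈ A := ⟨hab, hb⟩
  obtain ⟨has, hgf⟩ : sInf A ∈ A := hA_closed.csInf_mem ⟨b, hbA⟩ hA_bdd
  have hbefore : ∀ t ∈ Ico a (sInf A), f t < g t := fun t ⟨hat, hts⟩ =>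
    lt_of_not_ge fun hle => (csInf_le hA_bdd ⟨hat, hle⟩).not_gt hts
  have has' : a < sInf A := has.lt_of_ne fun h => (h ▸ hgf).not_gt ha
  refine ⟨sInf A, ⟨has', csInf_le hA_bdd hbA⟩, le_antisymm ?_ hgf, hbefore⟩
  have hlim : Filter.Tendsto (fun t => f t - g t) (nhdsWithin (sInf A) (Iio (sInf A)))
      (nhds (f (sInf A) - g (sInf A))) :=
    ((hf.sub hg).tendsto _).mono_left nhdsWithin_le_nhds
  have : f (sInf A) - g (sInf A) ≤ 0 := le_of_tendsto hlim <| by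
    filter_upwards [Ioo_mem_nhdsLT has'] with t ht
    exact sub_nonpos.mpr (hbefore t ⟨ht.1.le, ht.2⟩).le
  linarith

theorem HasDerivAt.le_of_forall_Ico_le_of_eq {f g : ℝ → ℝ} {f' g' a b : ℝ} (hab : a < b)
    (hf : HasDerivAt f f' b) (hg : HasDerivAt g g' b) (hle : ∀ t ∈ Ico a b, f t ≤ g t)
    (heq : f b = g b) : g' ≤ f' := by
  have hmin : IsMinOn (fun t => g t - f t) (Icc a b) b := fun t ht => by
    rcases ht.2.lt_or_eq with htb | rfl
    · simpa [heq] using hle t ⟨ht.1, htb⟩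
    · simp
  have hcone : a - b ∈ posTangentConeAt (Icc a b) b :=
    sub_mem_posTangentConeAt_of_segment_subset (by rw [segment_symm, segment_eq_Icc hab.le])
  have := hmin.localize.hasFDerivWithinAt_nonneg (hg.sub hf).hasDerivWithinAt hcone
  rw [ContinuousLinearMap.toSpanSingleton_apply, smul_eq_mul] at this
  nlinarith

theorem mul_lt_sub_mul_log_of_eq_exp {C ε s Y Y' Y₁ : ℝ} (hC : 0 < C) (hε : 0 < ε)
    (hε2 : ε < log 2) (hs : 0 < s) (hY : Y = exp (-C) * exp (-ε * s)) (hY' : -ε * Y ≤ Y')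
    (hY₁ : Y₁ < exp (-C) * exp (-ε * (s - 1))) :
    C * Y₁ < s * Y' - 2 * Y * log Y := by
  have hYpos : 0 < Y := hY ▸ by positivity
  have hlog : log Y = -C - ε * s := by
    rw [hY, log_mul (exp_ne_zero _) (exp_ne_zero _), log_exp, log_exp]; ring
  have hexp : exp ε < 2 := by simpa [exp_log] using exp_lt_exp.mpr hε2
  have hY₁' : Y₁ < 2 * Y := calc
    Y₁ < exp (-C) * exp (-ε * (s - 1)) := hY₁
    _ = exp ε * Y := by rw [hY, show -ε * (s - 1) = -ε * s + ε by ring, exp_add]; ring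
    _ < 2 * Y := by gcongr
  calc C * Y₁ < C * (2 * Y) := by gcongr
    _ < s * (-ε * Y) + 2 * Y * (C + ε * s) := by nlinarith [mul_pos (mul_pos hε hs) hYpos]
    _ ≤ s * Y' - 2 * Y * log Y := by rw [hlog]; nlinarith

theorem stmt_6_general (C ε : ℝ) (hC : 0 < C) (hε : 0 < ε) (hε2 : ε < Real.log 2)
    (y : ℝ → ℝ) (hdiff : Differentiable ℝ y) (hmono : Antitone y)
    (h0 : y (1 / ε) < Real.exp (-C) * Real.exp (-2))
    (hineq : ∀ t ≥ 1 / ε + 1,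
      t * deriv y t - 2 * y t * Real.log (y t) ≤ C * y (t - 1)) :
    ∀ t ≥ 1 / ε, y t < Real.exp (-C) * Real.exp (-ε * t) := by
  set g : ℝ → ℝ := fun t => exp (-C) * exp (-ε * t) with hg
  have hg_deriv (s : ℝ) : HasDerivAt g (-ε * g s) s := by
    refine (((hasDerivAt_id s).const_mul (-ε)).exp.const_mul (exp (-C))).congr_deriv ?_
    simp only [hg, id, mul_one]; ring
  have hstart : ∀ t ∈ Icc (1 / ε) (1 / ε + 1), y t < g t := fun t ht => by
    have hε1 : ε * (1 / ε) = 1 := by field_simp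
    have : ε * t ≤ 2 := by nlinarith [ht.2, log_two_lt_d9]
    calc y t ≤ y (1 / ε) := hmono ht.1
      _ < exp (-C) * exp (-2) := h0
      _ ≤ g t := by simp only [hg]; gcongr; linarith
  intro t ht
  by_contra! hcross
  obtain ⟨s, ⟨hs_gt, -⟩, hys, hbefore⟩ := exists_first_eq_of_lt_of_le hdiff.continuous
    (by fun_prop) (hstart _ ⟨le_rfl, by linarith⟩) ht hcross
  have hs : 1 / ε + 1 < s := lt_of_not_ge fun h => (hstart s ⟨hs_gt.le, h⟩).ne hys
  have hderiv : -ε * g s ≤ deriv y s :=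
    (hdiff s).hasDerivAt.le_of_forall_Ico_le_of_eq hs_gt (hg_deriv s)
      (fun t ht => (hbefore t ht).le) hys
  have hprev : y (s - 1) < g (s - 1) := hbefore _ ⟨by linarith, by linarith⟩
  have hs_pos : 0 < s := lt_trans (by positivity) hs
  exact (hineq s hs.le).not_gt
    (mul_lt_sub_mul_log_of_eq_exp hC hε hε2 hs_pos hys (hys ▸ hderiv) hprev)

/-- First exponential decay step (inequality (i12)) in the proof that a
noncompact shrinking gradient Ricci soliton has infinite volume. -/
theorem stmt_6 (C ε : ℝ) (hC : 0 < C) (hε : 0 < ε) (hε2 : ε < Real.log 2)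
    (y : ℝ → ℝ) (hy : ∀ t, 0 < y t) (hdiff : Differentiable ℝ y) (hmono : Antitone y)
    (h0 : y (1 / ε) < Real.exp (-C) * Real.exp (-2))
    (hineq : ∀ t ≥ 1 / ε + 1,
      t * deriv y t - 2 * y t * Real.log (y t) ≤ C * y (t - 1)) :
    ∀ t ≥ 1 / ε, y t < Real.exp (-C) * Real.exp (-ε * t) :=
  stmt_6_general C ε hC hε hε2 y hdiff hmono h0 hineq
end

section
/- Let C > 0, b > 0 and T > 0 be real numbers. Let y : ℝ → (0, ∞) be a differentiable nonincreasing function such that y(t) ≤ e^{−b t} for all t ≥ T and such that t·y'(t) − 2·y(t)·log y(t) ≤ C·y(t−1) for all t ≥ T. Then there exists T' ≥ T such that y(t) ≤ e^{−(3/2) b t} for all t ≥ T'. -/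
open Real Filter Set Topology

/-- Inductive bootstrap step (inequality (i14')): the decay exponent of a
solution of the differential inequality improves by a factor 3/2. -/
theorem stmt_7 (C b T : ℝ) (hC : 0 < C) (hb : 0 < b) (hT : 0 < T)
    (y : ℝ → ℝ) (hy : ∀ t, 0 < y t) (hdiff : Differentiable ℝ y) (hmono : Antitone y)
    (hdecay : ∀ t ≥ T, y t ≤ Real.exp (-b * t))
    (hineq : ∀ t ≥ T, t * deriv y t - 2 * y t * Real.log (y t) ≤ C * y (t - 1)) :
    ∃ T' ≥ T, ∀ t ≥ T', y t ≤ Real.exp (-(3 / 2) * b * t) := by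
  set T₀ : ℝ := max T (8 * C * Real.exp ((7/4) * b) / b) with hT₀def
  set c : ℝ := (3/4) * b * (T₀ + 1) with hcdef
  set h : ℝ → ℝ := fun t => Real.exp (-(7/4) * b * t + c) with hhdef
  have hT₀T : T ≤ T₀ := le_max_left _ _
  have hT₀pos : 0 < T₀ := lt_of_lt_of_le hT hT₀T
  have hT₀C : 8 * C * Real.exp ((7/4) * b) / b ≤ T₀ := le_max_right _ _
  have hT₀C' : 8 * C * Real.exp ((7/4) * b) ≤ b * T₀ := by
    rw [div_le_iff₀ hb] at hT₀C; linarith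
  have hhpos : ∀ t, 0 < h t := fun t => Real.exp_pos _
  have hhdiff : ∀ t : ℝ, HasDerivAt h (h t * (-(7/4) * b)) t := by
    intro t
    have h1 : HasDerivAt (fun t : ℝ => -(7/4) * b * t + c) (-(7/4) * b) t := by
      simpa using ((hasDerivAt_id t).const_mul (-(7/4) * b)).add_const c
    exact h1.exp
  -- main claim : y ≤ h on [T₀, ∞)
  have main : ∀ t, T₀ ≤ t → y t ≤ h t := by
    by_contra hcon
    push_neg at hcon
    set S : Set ℝ := {t | T₀ ≤ t ∧ h t < y t} with hSdef
    have hSne : S.Nonempty := by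
      obtain ⟨t, ht, ht2⟩ := hcon; exact ⟨t, ht, ht2⟩
    have hSbdd : BddBelow S := ⟨T₀, fun s hs => hs.1⟩
    set τ : ℝ := sInf S with hτdef
    have hSge : ∀ s ∈ S, T₀ + 1 ≤ s := by
      intro s hs
      by_contra hlt
      push_neg at hlt
      have h1 : y s ≤ Real.exp (-b * s) := hdecay s (le_trans hT₀T hs.1)
      have h2 : Real.exp (-b * s) ≤ h s := by
        apply Real.exp_le_exp.mpr
        rw [hcdef]
        have := hs.1
        nlinarith
      exact absurd (le_trans h1 h2) (not_le.mpr hs.2)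
    have hτge : T₀ + 1 ≤ τ := le_csInf hSne hSge
    have hτT : T ≤ τ := le_trans hT₀T (by linarith)
    have hτle : ∀ s ∈ S, τ ≤ s := fun s hs => csInf_le hSbdd hs
    have hyle : ∀ t, T₀ ≤ t → t < τ → y t ≤ h t := by
      intro t ht htτ
      by_contra hgt
      exact absurd (hτle t ⟨ht, not_le.mp hgt⟩) (not_le.mpr htτ)
    have hcont : Continuous fun t => y t - h t :=
      hdiff.continuous.sub (Real.continuous_exp.comp ((continuous_const.mul continuous_id).add continuous_const))
    -- y τ ≤ h τ
    have hle1 : y τ ≤ h τ := by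
      have hlim : Tendsto (fun t => y t - h t) (𝓝[<] τ) (𝓝 (y τ - h τ)) :=
        (hcont.tendsto τ).mono_left nhdsWithin_le_nhds
      have hev : ∀ᶠ t in 𝓝[<] τ, y t - h t ≤ 0 := by
        filter_upwards [Ioo_mem_nhdsLT (show T₀ < τ by linarith)] with t ht
        exact sub_nonpos.mpr (hyle t ht.1.le ht.2)
      have := le_of_tendsto hlim hev
      linarith
    -- h τ ≤ y τ
    have hge1 : h τ ≤ y τ := by
      by_contra hlt
      push_neg at hlt
      have hcτ : ContinuousAt (fun t => y t - h t) τ := hcont.continuousAt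
      have hev : ∀ᶠ t in 𝓝 τ, y t - h t < 0 := by
        have : Tendsto (fun t => y t - h t) (𝓝 τ) (𝓝 (y τ - h τ)) := hcτ
        exact this.eventually (gt_mem_nhds (by linarith))
      rw [Metric.eventually_nhds_iff] at hev
      obtain ⟨ε, hε, hball⟩ := hev
      obtain ⟨s, hsS, hsel⟩ := exists_lt_of_csInf_lt hSne (show sInf S < τ + ε by
        rw [← hτdef]; linarith)
      have hsτ : τ ≤ s := hτle s hsS
      have : y s - h s < 0 := hball (show dist s τ < ε by
        rw [Real.dist_eq, abs_of_nonneg (by linarith)]; linarith)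
      have := hsS.2
      linarith
    have hyτ : y τ = h τ := le_antisymm hle1 hge1
    -- derivative comparison at τ
    have hdy : HasDerivAt y (deriv y τ) τ := (hdiff τ).hasDerivAt
    have hdf : HasDerivAt (fun t => y t - h t) (deriv y τ - h τ * (-(7/4) * b)) τ :=
      hdy.sub (hhdiff τ)
    have hd : deriv y τ - h τ * (-(7/4) * b) ≥ 0 := by
      by_contra hdneg
      push_neg at hdneg
      have hslope := hasDerivAt_iff_tendsto_slope.mp hdf
      have hev : ∀ᶠ s in 𝓝[≠] τ, slope (fun t => y t - h t) τ s < 0 :=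
        hslope.eventually (gt_mem_nhds hdneg)
      have hev' : ∀ᶠ s in 𝓝[>] τ, slope (fun t => y t - h t) τ s < 0 :=
        hev.filter_mono (nhdsWithin_mono τ (fun x hx => ne_of_gt hx))
      rw [eventually_nhdsWithin_iff, Metric.eventually_nhds_iff] at hev'
      obtain ⟨ε, hε, hball⟩ := hev'
      obtain ⟨s, hsS, hsel⟩ := exists_lt_of_csInf_lt hSne (show sInf S < τ + ε by
        rw [← hτdef]; linarith)
      have hsτ : τ ≤ s := hτle s hsS
      have hsne : τ < s := by
        rcases lt_or_eq_of_le hsτ with h' | h'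
        · exact h'
        · exfalso
          have := hsS.2
          rw [← h'] at this
          linarith [hyτ ▸ this]
      have hsl : slope (fun t => y t - h t) τ s < 0 :=
        hball (show dist s τ < ε by
          rw [Real.dist_eq, abs_of_nonneg (by linarith)]; linarith) hsne
      rw [slope_def_field] at hsl
      have h1 : y s - h s > 0 := sub_pos.mpr hsS.2
      have h2 : (0:ℝ) < s - τ := by linarith
      rw [hyτ, sub_self, sub_zero] at hsl
      exact absurd hsl (not_lt.mpr (div_pos h1 h2).le)
    -- differential inequality at τ
    have hlog : Real.log (y τ) ≤ -b * τ := by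
      have h1 : y τ ≤ Real.exp (-b * τ) := hdecay τ hτT
      calc Real.log (y τ) ≤ Real.log (Real.exp (-b * τ)) :=
            Real.log_le_log (hy τ) h1
        _ = -b * τ := Real.log_exp _
    have hyτ1 : y (τ - 1) ≤ Real.exp ((7/4) * b) * h τ := by
      have h1 : y (τ - 1) ≤ h (τ - 1) := hyle (τ - 1) (by linarith) (by linarith)
      have h2 : h (τ - 1) = Real.exp ((7/4) * b) * h τ := by
        rw [hhdef]
        simp only
        rw [← Real.exp_add]
        ring_nf
      rw [h2] at h1
      exact h1
    have hkey := hineq τ hτT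
    have hτpos : 0 < τ := by linarith
    have hyτpos : 0 < y τ := hy τ
    -- t* * deriv y τ ≤ C * exp((7/4)b) * y τ - 2 * b * τ * y τ
    have h5 : τ * deriv y τ ≤ C * Real.exp ((7/4) * b) * y τ - 2 * b * τ * y τ := by
      have h6 : 2 * y τ * Real.log (y τ) ≤ 2 * y τ * (-b * τ) :=
        mul_le_mul_of_nonneg_left hlog (by positivity)
      have h7 : C * y (τ - 1) ≤ C * (Real.exp ((7/4) * b) * y τ) := by
        apply mul_le_mul_of_nonneg_left _ hC.le
        rw [hyτ]; exact hyτ1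
      linarith [hkey, h6, h7]
    -- derivative lower bound : deriv y τ ≥ -(7/4) * b * y τ
    have h8 : -(7/4) * b * y τ ≤ deriv y τ := by
      rw [hyτ]; linarith [hd]
    have h9 : τ * (-(7/4) * b * y τ) ≤ τ * deriv y τ :=
      mul_le_mul_of_nonneg_left h8 hτpos.le
    -- contradiction
    have hbτ : 8 * C * Real.exp ((7/4) * b) ≤ b * τ := by
      have := mul_le_mul_of_nonneg_left (show T₀ ≤ τ by linarith) hb.le
      linarith
    have h10 : (1/4) * b * τ * y τ ≤ C * Real.exp ((7/4) * b) * y τ := by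
      linarith [h9, h5]
    have h11 : (1/4) * b * τ ≤ C * Real.exp ((7/4) * b) :=
      le_of_mul_le_mul_right (by linarith [h10]) hyτpos
    have h12 : 0 < C * Real.exp ((7/4) * b) := mul_pos hC (Real.exp_pos _)
    linarith
  -- conclude
  refine ⟨max T (3 * (T₀ + 1)), le_max_left _ _, fun t ht => ?_⟩
  have ht3 : 3 * (T₀ + 1) ≤ t := le_trans (le_max_right _ _) ht
  have ht₀ : T₀ ≤ t := by linarith
  calc y t ≤ h t := main t ht₀
    _ ≤ Real.exp (-(3 / 2) * b * t) := by
        apply Real.exp_le_exp.mpr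
        rw [hcdef]
        nlinarith
end

section
/- Let C > 0 and T > 0 be real numbers. Let y : ℝ → (0, ∞) be a differentiable nonincreasing function such that y(t) → 0 as t → ∞ and such that t·y'(t) − 2·y(t)·log y(t) ≤ C·y(t−1) for all t ≥ T. Then for every a > 0 there exists a constant C(a) > 0 such that y(t) ≤ C(a)·e^{−a t} for all t ≥ T. -/
open Real Filter Set

/-- Core first-crossing barrier lemma: if `y` lies strictly below the barrier
`Q e^{-b t}` on the initial interval `[T₁-1, T₁]` and the gap condition holds,
then `y` stays below the barrier for all `t ≥ T₁`. -/
private lemma stmt8_barrier (C T : ℝ) (hC : 0 < C) (hT : 0 < T) (y : ℝ → ℝ)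
    (hy : ∀ t, 0 < y t) (hdiff : Differentiable ℝ y)
    (hineq : ∀ t ≥ T, t * deriv y t - 2 * y t * Real.log (y t) ≤ C * y (t - 1))
    (b Q T₁ : ℝ) (hb : 0 < b) (hQ : 0 < Q) (hT₁ : T + 1 ≤ T₁)
    (hinit : ∀ s, T₁ - 1 ≤ s → s ≤ T₁ → y s < Q * Real.exp (-b * s))
    (hgap : 2 * Real.log Q + C * Real.exp b < b * T₁) :
    ∀ t ≥ T₁, y t ≤ Q * Real.exp (-b * t) := by
  by_contra hcon
  push_neg at hcon
  obtain ⟨t₀, ht₀T, ht₀⟩ := hcon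
  set S : Set ℝ := {t | T₁ ≤ t ∧ Q * Real.exp (-b * t) ≤ y t} with hS
  have hSne : S.Nonempty := ⟨t₀, ht₀T, ht₀.le⟩
  have hSbdd : BddBelow S := ⟨T₁, fun t ht => ht.1⟩
  have hcont : Continuous fun s : ℝ => Q * Real.exp (-b * s) := by continuity
  have hSclosed : IsClosed S := by
    have h1 : IsClosed {t : ℝ | T₁ ≤ t} := isClosed_Ici
    have h2 : IsClosed {t : ℝ | Q * Real.exp (-b * t) ≤ y t} :=
      isClosed_le hcont hdiff.continuous
    exact h1.inter h2
  set t₁ := sInf S with ht₁def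
  have ht₁S : t₁ ∈ S := hSclosed.csInf_mem hSne hSbdd
  have ht₁ge : T₁ ≤ t₁ := ht₁S.1
  have hlt : ∀ s, T₁ ≤ s → s < t₁ → y s < Q * Real.exp (-b * s) := by
    intro s hs1 hs2
    by_contra hcon2
    push_neg at hcon2
    exact absurd (csInf_le hSbdd ⟨hs1, hcon2⟩) (not_le.mpr hs2)
  have ht₁gt : T₁ < t₁ := by
    rcases lt_or_eq_of_le ht₁ge with h | h
    · exact h
    · exfalso
      have h1 := hinit t₁ (by linarith) h.symm.le
      have h2 := ht₁S.2
      linarith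
  have heq : y t₁ = Q * Real.exp (-b * t₁) := by
    refine le_antisymm ?_ ht₁S.2
    have htend : Filter.Tendsto (fun s => Q * Real.exp (-b * s) - y s)
        (nhdsWithin t₁ (Set.Iio t₁)) (nhds (Q * Real.exp (-b * t₁) - y t₁)) :=
      ((hcont.sub hdiff.continuous).continuousAt).tendsto.mono_left nhdsWithin_le_nhds
    have hev : ∀ᶠ s in nhdsWithin t₁ (Set.Iio t₁), 0 ≤ Q * Real.exp (-b * s) - y s := by
      filter_upwards [Ioo_mem_nhdsLT_of_mem (⟨ht₁gt, le_rfl⟩ : t₁ ∈ Set.Ioc T₁ t₁)] with s hs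
      exact le_of_lt (sub_pos.mpr (hlt s hs.1.le hs.2))
    have := ge_of_tendsto htend hev
    linarith
  have hP : 0 < Q * Real.exp (-b * t₁) := by positivity
  -- derivative bound at the first crossing
  have hd1 : HasDerivAt (fun s : ℝ => -b * s) (-b) t₁ := by
    simpa using (hasDerivAt_id t₁).const_mul (-b)
  have hd2 : HasDerivAt (fun s : ℝ => Q * Real.exp (-b * s))
      (Real.exp (-b * t₁) * -b * Q) t₁ := hd1.exp.const_mul Q |>.congr_deriv (by ring)
  have hd3 : HasDerivAt (fun s => Q * Real.exp (-b * s) - y s)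
      (Real.exp (-b * t₁) * -b * Q - deriv y t₁) t₁ := hd2.sub (hdiff t₁).hasDerivAt
  have hslope : Filter.Tendsto (slope (fun s => Q * Real.exp (-b * s) - y s) t₁)
      (nhdsWithin t₁ (Set.Iio t₁)) (nhds (Real.exp (-b * t₁) * -b * Q - deriv y t₁)) :=
    (hasDerivAt_iff_tendsto_slope.mp hd3).mono_left
      (nhdsWithin_mono _ fun x hx => ne_of_lt hx)
  have hderiv_le : Real.exp (-b * t₁) * -b * Q - deriv y t₁ ≤ 0 := by
    refine le_of_tendsto hslope ?_
    filter_upwards [Ioo_mem_nhdsLT_of_mem (⟨ht₁gt, le_rfl⟩ : t₁ ∈ Set.Ioc T₁ t₁)] with s hs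
    have h1 : 0 < Q * Real.exp (-b * s) - y s := sub_pos.mpr (hlt s hs.1.le hs.2)
    have h2 : Q * Real.exp (-b * t₁) - y t₁ = 0 := by rw [heq]; ring
    rw [slope_def_field, h2, sub_zero]
    exact div_nonpos_of_nonneg_of_nonpos h1.le (by linarith [hs.2])
  have hdy : -(b * (Q * Real.exp (-b * t₁))) ≤ deriv y t₁ := by nlinarith [hderiv_le]
  have ht₁pos : (0:ℝ) < t₁ := by linarith
  have hlogy : Real.log (y t₁) = Real.log Q + (-b * t₁) := by
    rw [heq, Real.log_mul (ne_of_gt hQ) (Real.exp_ne_zero _), Real.log_exp]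
  have hdelay : y (t₁ - 1) ≤ Q * Real.exp (-b * (t₁ - 1)) := by
    rcases le_or_gt T₁ (t₁ - 1) with h | h
    · exact (hlt _ h (by linarith)).le
    · exact (hinit _ (by linarith) h.le).le
  have hmain := hineq t₁ (by linarith)
  have hE : Real.exp (-b * (t₁ - 1)) = Real.exp b * Real.exp (-b * t₁) := by
    rw [← Real.exp_add]; ring_nf
  have h5 : C * y (t₁ - 1) ≤ C * Real.exp b * (Q * Real.exp (-b * t₁)) := by
    calc C * y (t₁ - 1) ≤ C * (Q * Real.exp (-b * (t₁ - 1))) :=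
          mul_le_mul_of_nonneg_left hdelay hC.le
      _ = C * Real.exp b * (Q * Real.exp (-b * t₁)) := by rw [hE]; ring
  have h6 : t₁ * (-(b * (Q * Real.exp (-b * t₁)))) ≤ t₁ * deriv y t₁ :=
    mul_le_mul_of_nonneg_left hdy ht₁pos.le
  rw [hlogy, heq] at hmain
  -- hmain : t₁ * deriv y t₁ - 2 * (Q * exp (-b*t₁)) * (log Q + (-b * t₁)) ≤ C * y (t₁ - 1)
  have hfinal : (Q * Real.exp (-b * t₁)) * (b * t₁ - 2 * Real.log Q - C * Real.exp b) ≤ 0 := by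
    nlinarith [hmain, h5, h6]
  have hbt : b * T₁ < b * t₁ := by
    exact mul_lt_mul_of_pos_left ht₁gt hb
  have hpos : 0 < b * t₁ - 2 * Real.log Q - C * Real.exp b := by linarith
  nlinarith [mul_pos hP hpos]

/-- Extend an exponential bound valid from `T₁` down to `T` by enlarging the constant. -/
private lemma stmt8_extend (T T₁ b Q : ℝ) (y : ℝ → ℝ) (hy : ∀ t, 0 < y t)
    (hmono : Antitone y) (hb : 0 < b) (hQ : 0 < Q) (hTT : T ≤ T₁)
    (h : ∀ t ≥ T₁, y t ≤ Q * Real.exp (-b * t)) :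
    ∃ K > 0, ∀ t ≥ T, y t ≤ K * Real.exp (-b * t) := by
  refine ⟨max Q (y T * Real.exp (b * T₁)), lt_max_iff.mpr (Or.inl hQ), ?_⟩
  intro t ht
  rcases le_total t T₁ with hcase | hcase
  · have h1 : y t ≤ y T := hmono ht
    have h2 : (1:ℝ) ≤ Real.exp (b * T₁) * Real.exp (-b * t) := by
      rw [← Real.exp_add]
      exact Real.one_le_exp (by nlinarith)
    have h3 : y T ≤ y T * Real.exp (b * T₁) * Real.exp (-b * t) := by
      nlinarith [hy T]
    calc y t ≤ y T * Real.exp (b * T₁) * Real.exp (-b * t) := le_trans h1 h3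
      _ ≤ max Q (y T * Real.exp (b * T₁)) * Real.exp (-b * t) :=
          mul_le_mul_of_nonneg_right (le_max_right _ _) (Real.exp_pos _).le
  · calc y t ≤ Q * Real.exp (-b * t) := h t hcase
      _ ≤ max Q (y T * Real.exp (b * T₁)) * Real.exp (-b * t) :=
          mul_le_mul_of_nonneg_right (le_max_left _ _) (Real.exp_pos _).le

/-- Conclusion (i16) of the iterative decay argument: the differential
inequality forces decay faster than any exponential. -/
theorem stmt_8 (C T : ℝ) (hC : 0 < C) (hT : 0 < T)
    (y : ℝ → ℝ) (hy : ∀ t, 0 < y t) (hdiff : Differentiable ℝ y) (hmono : Antitone y)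
    (hlim : Filter.Tendsto y Filter.atTop (nhds 0))
    (hineq : ∀ t ≥ T, t * deriv y t - 2 * y t * Real.log (y t) ≤ C * y (t - 1)) :
    ∀ a > (0 : ℝ), ∃ Ca > (0 : ℝ), ∀ t ≥ T, y t ≤ Ca * Real.exp (-a * t) := by
  -- Base case: some exponential decay rate `b₀ > 0`.
  have base : ∃ b > (0:ℝ), ∃ K > (0:ℝ), ∀ t ≥ T, y t ≤ K * Real.exp (-b * t) := by
    set δ : ℝ := Real.exp (-(2 + C * Real.exp 1 + 2 * Real.log 2) / 2) with hδdef
    have hδ : 0 < δ := Real.exp_pos _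
    obtain ⟨N, hN⟩ := (Metric.tendsto_atTop.mp hlim δ hδ)
    set T₁ : ℝ := max (T + 1) (N + 1) with hT₁def
    have hT₁1 : T + 1 ≤ T₁ := le_max_left _ _
    have hT₁N : N + 1 ≤ T₁ := le_max_right _ _
    have hT₁pos : (1:ℝ) ≤ T₁ := by linarith
    set b : ℝ := 1 / T₁ with hbdef
    have hb : 0 < b := by positivity
    have hb1 : b ≤ 1 := by
      rw [hbdef]
      rw [div_le_one (by linarith)]
      exact hT₁pos
    have hbT₁ : b * T₁ = 1 := by
      rw [hbdef]
      field_simp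
    set ε : ℝ := y (T₁ - 1) with hεdef
    have hε : 0 < ε := hy _
    have hεδ : ε < δ := by
      have := hN (T₁ - 1) (by linarith)
      rw [Real.dist_eq, sub_zero, abs_of_pos (hy _)] at this
      exact this
    set Q : ℝ := 2 * ε * Real.exp (b * T₁) with hQdef
    have hQ : 0 < Q := by positivity
    have hinit : ∀ s, T₁ - 1 ≤ s → s ≤ T₁ → y s < Q * Real.exp (-b * s) := by
      intro s h1 h2
      have hys : y s ≤ ε := hmono h1
      have hexp : (1:ℝ) ≤ Real.exp (b * T₁) * Real.exp (-b * s) := by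
        rw [← Real.exp_add]
        exact Real.one_le_exp (by nlinarith)
      have : Q * Real.exp (-b * s) = 2 * ε * (Real.exp (b * T₁) * Real.exp (-b * s)) := by
        rw [hQdef]; ring
      nlinarith
    have hgap : 2 * Real.log Q + C * Real.exp b < b * T₁ := by
      have hlogQ : Real.log Q = Real.log 2 + Real.log ε + b * T₁ := by
        rw [hQdef, Real.log_mul (by positivity) (Real.exp_ne_zero _),
          Real.log_mul (by norm_num) (ne_of_gt hε), Real.log_exp]
      have hlogε : Real.log ε < -(2 + C * Real.exp 1 + 2 * Real.log 2) / 2 := by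
        calc Real.log ε < Real.log δ := Real.log_lt_log hε hεδ
          _ = -(2 + C * Real.exp 1 + 2 * Real.log 2) / 2 := Real.log_exp _
      have hCe : C * Real.exp b ≤ C * Real.exp 1 :=
        mul_le_mul_of_nonneg_left (Real.exp_le_exp.mpr hb1) hC.le
      rw [hlogQ, hbT₁]
      nlinarith
    have hbar := stmt8_barrier C T hC hT y hy hdiff hineq b Q T₁ hb hQ hT₁1 hinit hgap
    obtain ⟨K, hK, hKb⟩ := stmt8_extend T T₁ b Q y hy hmono hb hQ (by linarith) hbar
    exact ⟨b, hb, K, hK, hKb⟩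
  -- Inductive step: rate `b` improves to rate `3b/2`.
  have step : ∀ b > (0:ℝ), ∀ K > (0:ℝ), (∀ t ≥ T, y t ≤ K * Real.exp (-b * t)) →
      ∃ K' > (0:ℝ), ∀ t ≥ T, y t ≤ K' * Real.exp (-(3/2*b) * t) := by
    intro b hb K hK hbound
    set b' : ℝ := 3/2*b with hb'def
    have hb' : 0 < b' := by positivity
    set T₁ : ℝ := max (T + 1) ((2 * Real.log (2*K) + 2*b + C * Real.exp b' + 1) * 2 / b)
      with hT₁def
    have hT₁1 : T + 1 ≤ T₁ := le_max_left _ _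
    have hT₁2 : (2 * Real.log (2*K) + 2*b + C * Real.exp b' + 1) * 2 / b ≤ T₁ :=
      le_max_right _ _
    set Q : ℝ := 2 * K * Real.exp (-b * (T₁ - 1)) * Real.exp (b' * T₁) with hQdef
    have hQ : 0 < Q := by positivity
    have hinit : ∀ s, T₁ - 1 ≤ s → s ≤ T₁ → y s < Q * Real.exp (-b' * s) := by
      intro s h1 h2
      have hTs : T ≤ s := by linarith
      have e1 : y s ≤ K * Real.exp (-b * s) := hbound s hTs
      have e2 : Real.exp (-b * s) ≤ Real.exp (-b * (T₁ - 1)) :=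
        Real.exp_le_exp.mpr (by nlinarith)
      have e3 : (1:ℝ) ≤ Real.exp (b' * T₁) * Real.exp (-b' * s) := by
        rw [← Real.exp_add]
        exact Real.one_le_exp (by nlinarith)
      have e4 : Q * Real.exp (-b' * s)
          = 2 * K * Real.exp (-b * (T₁ - 1)) * (Real.exp (b' * T₁) * Real.exp (-b' * s)) := by
        rw [hQdef]; ring
      have f1 : 2 * K * Real.exp (-b * (T₁ - 1)) * 1
          ≤ 2 * K * Real.exp (-b * (T₁ - 1)) * (Real.exp (b' * T₁) * Real.exp (-b' * s)) :=
        mul_le_mul_of_nonneg_left e3 (by positivity)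
      have f2 : K * Real.exp (-b * s) ≤ K * Real.exp (-b * (T₁ - 1)) :=
        mul_le_mul_of_nonneg_left e2 hK.le
      have f3 : 0 < K * Real.exp (-b * (T₁ - 1)) := by positivity
      linarith [e1, e4, f1, f2, f3]
    have hgap : 2 * Real.log Q + C * Real.exp b' < b' * T₁ := by
      have hlogQ : Real.log Q = Real.log (2*K) + (-b * (T₁ - 1)) + b' * T₁ := by
        rw [hQdef, Real.log_mul (by positivity) (Real.exp_ne_zero _),
          Real.log_mul (by positivity) (Real.exp_ne_zero _), Real.log_exp, Real.log_exp]
      have hbT : 2 * Real.log (2*K) + 2*b + C * Real.exp b' + 1 ≤ b / 2 * T₁ := by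
        have h0 : 0 < b / 2 := by positivity
        calc 2 * Real.log (2*K) + 2*b + C * Real.exp b' + 1
            = (2 * Real.log (2*K) + 2*b + C * Real.exp b' + 1) * 2 / b * (b/2) := by
              field_simp
          _ ≤ T₁ * (b/2) := mul_le_mul_of_nonneg_right hT₁2 h0.le
          _ = b / 2 * T₁ := by ring
      rw [hlogQ, hb'def]
      nlinarith
    have hbar := stmt8_barrier C T hC hT y hy hdiff hineq b' Q T₁ hb' hQ hT₁1 hinit hgap
    exact stmt8_extend T T₁ b' Q y hy hmono hb' hQ (by linarith) hbar
  obtain ⟨b₀, hb₀, K₀, hK₀, hbase⟩ := base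
  have H : ∀ n : ℕ, ∃ K > (0:ℝ), ∀ t ≥ T, y t ≤ K * Real.exp (-((3/2)^n * b₀) * t) := by
    intro n
    induction n with
    | zero => exact ⟨K₀, hK₀, by simpa using hbase⟩
    | succ n ih =>
      obtain ⟨K, hK, hKb⟩ := ih
      obtain ⟨K', hK', h'⟩ := step ((3/2)^n * b₀) (by positivity) K hK hKb
      refine ⟨K', hK', fun t ht => ?_⟩
      have hring : (3/2:ℝ) * ((3/2)^n * b₀) = (3/2)^(n+1) * b₀ := by ring
      have := h' t ht
      rwa [hring] at this
  intro a ha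
  obtain ⟨n, hn⟩ := pow_unbounded_of_one_lt (a / b₀) (by norm_num : (1:ℝ) < 3/2)
  obtain ⟨K, hK, hKb⟩ := H n
  refine ⟨K, hK, fun t ht => ?_⟩
  have hbn : a ≤ (3/2)^n * b₀ := by
    rw [div_lt_iff₀ hb₀] at hn
    linarith
  have hexp : Real.exp (-((3/2)^n * b₀) * t) ≤ Real.exp (-a * t) := by
    apply Real.exp_le_exp.mpr
    nlinarith
  calc y t ≤ K * Real.exp (-((3/2)^n * b₀) * t) := hKb t ht
    _ ≤ K * Real.exp (-a * t) := mul_le_mul_of_nonneg_left hexp hK.le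
end

section
/- Let n ≥ 1 be an integer and let T ≥ max(1, √(2(n+2))). Let V, χ : [T, ∞) → ℝ be nonnegative functions such that χ(t) ≤ (n/2)·V(t) for all t ≥ T and such that V(t+1)/(t+1)^n − V(t)/t^n ≤ 4·χ(t+1)/(t+1)^{n+2} for all t ≥ T. Then: (1) for all t ≥ T, V(t+1) − V(t) ≤ 2^n·V(t)/t + 2n·V(t+1)/(t+1)²; and (2) there exists a constant c(n) depending only on n such that for all t ≥ max(T, c(n)), V(t+1) ≤ 2·V(t) and V(t+1) − V(t) ≤ (2^n + 4n)·V(t)/t. -/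
lemma aux_pow (t : ℝ) (ht : 1 ≤ t) : ∀ m : ℕ, (t+1)^(m+1) ≤ t^(m+1) + (2^(m+1) - 1) * t^m := by
  intro m
  induction m with
  | zero => norm_num
  | succ k ih =>
    have ht0 : (0:ℝ) ≤ t := by linarith
    have h1 : t^k ≤ t^(k+1) := by
      calc t^k = t^k * 1 := by ring
      _ ≤ t^k * t := by
          exact mul_le_mul_of_nonneg_left ht (pow_nonneg ht0 k)
      _ = t^(k+1) := by ring
    have h2 : (0:ℝ) ≤ t^k := pow_nonneg ht0 k
    have h2' : (0:ℝ) ≤ t^(k+1) := pow_nonneg ht0 (k+1)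
    have h3 : (1:ℝ) ≤ 2^(k+1) := one_le_pow₀ (by norm_num)
    calc (t+1)^(k+1+1) = (t+1)^(k+1) * (t+1) := by ring
    _ ≤ (t^(k+1) + (2^(k+1)-1) * t^k) * (t+1) :=
        mul_le_mul_of_nonneg_right ih (by linarith)
    _ ≤ t^(k+1+1) + (2^(k+1+1)-1) * t^(k+1) := by
        have e1 : t^(k+1) * t = t^(k+1+1) := by ring
        have e2 : t^k * t = t^(k+1) := by ring
        have e3 : (2:ℝ)^(k+1+1) = 2 * 2^(k+1) := by ring
        nlinarith [mul_le_mul_of_nonneg_left h1 (show (0:ℝ) ≤ 2^(k+1)-1 by linarith)]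

/-- Consequences of the Cao–Zhou inequality for the volume function of the
sublevel sets of the potential of a shrinking gradient Ricci soliton. -/
theorem stmt_9 (n : ℕ) (hn : 1 ≤ n) (T : ℝ) (hT : max 1 (Real.sqrt (2 * ((n : ℝ) + 2))) ≤ T)
    (V χ : ℝ → ℝ) (hV : ∀ t ≥ T, 0 ≤ V t) (hχ : ∀ t ≥ T, 0 ≤ χ t)
    (hχV : ∀ t ≥ T, χ t ≤ ((n : ℝ) / 2) * V t)
    (hCZ : ∀ t ≥ T, V (t + 1) / (t + 1) ^ n - V t / t ^ n
      ≤ 4 * χ (t + 1) / (t + 1) ^ (n + 2)) :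
    (∀ t ≥ T, V (t + 1) - V t ≤ 2 ^ n * V t / t + 2 * n * V (t + 1) / (t + 1) ^ 2) ∧
    ∃ c : ℝ, ∀ t ≥ max T c,
      V (t + 1) ≤ 2 * V t ∧ V (t + 1) - V t ≤ ((2 : ℝ) ^ n + 4 * n) * V t / t := by
  have hT1 : (1:ℝ) ≤ T := le_trans (le_max_left _ _) hT
  have part1 : ∀ t ≥ T, V (t + 1) - V t ≤ 2 ^ n * V t / t + 2 * n * V (t + 1) / (t + 1) ^ 2 := by
    intro t ht
    have ht1 : (1:ℝ) ≤ t := hT1.trans ht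
    have ht0 : (0:ℝ) < t := by linarith
    have htt : (0:ℝ) < t + 1 := by linarith
    have hs : (0:ℝ) < (t+1)^2 := by positivity
    have hb : (0:ℝ) < (t+1)^n := by positivity
    have ha : (0:ℝ) < t^n := by positivity
    have hbs : (0:ℝ) < (t+1)^n * (t+1)^2 := by positivity
    have hVt : 0 ≤ V t := hV t ht
    have hVt1 : 0 ≤ V (t+1) := hV (t+1) (by linarith)
    have hχ1 : χ (t+1) ≤ ((n:ℝ)/2) * V (t+1) := hχV (t+1) (by linarith)
    have h0 := hCZ t ht
    have hpow : (t+1)^(n+2) = (t+1)^n * (t+1)^2 := pow_add _ _ _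
    have hnum : 4 * χ (t+1) ≤ 2 * n * V (t+1) := by linarith
    have hstep : 4 * χ (t+1) / (t+1)^(n+2) ≤ 2 * n * V (t+1) / ((t+1)^n * (t+1)^2) := by
      rw [hpow]
      exact div_le_div_of_nonneg_right hnum hbs.le
    have h1 : V (t+1) / (t+1)^n ≤ V t / t^n + 2*n*V (t+1) / ((t+1)^n * (t+1)^2) := by
      linarith
    have h2 : V (t+1) ≤ V t * ((t+1)^n / t^n) + 2*n*V (t+1) / (t+1)^2 := by
      have hm := mul_le_mul_of_nonneg_right h1 hb.le
      calc V (t+1) = V (t+1) / (t+1)^n * (t+1)^n := by field_simp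
      _ ≤ (V t / t^n + 2*n*V (t+1) / ((t+1)^n * (t+1)^2)) * (t+1)^n := hm
      _ = V t * ((t+1)^n / t^n) + 2*n*V (t+1) / (t+1)^2 := by
          field_simp
    obtain ⟨m, rfl⟩ : ∃ m, n = m + 1 := ⟨n - 1, (Nat.succ_pred_eq_of_pos hn).symm⟩
    have haux : (t+1)^(m+1) ≤ t^(m+1) + 2^(m+1) * t^m := by
      have := aux_pow t ht1 m
      have h2m : (0:ℝ) ≤ t^m := pow_nonneg (by linarith) m
      nlinarith
    have h4 : (t+1)^(m+1) / t^(m+1) ≤ 1 + 2^(m+1) / t := by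
      rw [div_le_iff₀ ha]
      have e : (1 + 2^(m+1)/t) * t^(m+1) = t^(m+1) + 2^(m+1) * t^m := by
        rw [pow_succ]
        field_simp
        ring
      rw [e]; exact haux
    have h5 : V t * ((t+1)^(m+1) / t^(m+1)) ≤ V t + 2^(m+1) * V t / t := by
      calc V t * ((t+1)^(m+1) / t^(m+1)) ≤ V t * (1 + 2^(m+1)/t) :=
        mul_le_mul_of_nonneg_left h4 hVt
      _ = V t + 2^(m+1) * V t / t := by ring
    linarith
  refine ⟨part1, 2^(n+1) + 8*n, ?_⟩
  intro t ht
  have htT : T ≤ t := le_trans (le_max_left _ _) ht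
  have htc : 2^(n+1) + 8*(n:ℝ) ≤ t := le_trans (le_max_right _ _) ht
  have hn0 : (1:ℝ) ≤ n := by exact_mod_cast hn
  have hpw : (0:ℝ) < 2^(n+1) := by positivity
  have htp : (2:ℝ)^(n+1) ≤ t := by linarith
  have ht8 : 8*(n:ℝ) ≤ t := by linarith
  have ht1 : (1:ℝ) ≤ t := hT1.trans htT
  have ht0 : (0:ℝ) < t := by linarith
  have hs : (0:ℝ) < (t+1)^2 := by positivity
  have hVt : 0 ≤ V t := hV t htT
  have hVt1 : 0 ≤ V (t+1) := hV (t+1) (by linarith)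
  have hp1 := part1 t htT
  have hA : 2^n * V t / t ≤ V t / 2 := by
    rw [div_le_div_iff₀ ht0 (by norm_num : (0:ℝ) < 2)]
    have e : (2:ℝ)^(n+1) = 2 * 2^n := by ring
    nlinarith [mul_le_mul_of_nonneg_left htp hVt]
  have hB : 2*n*V (t+1) / (t+1)^2 ≤ V (t+1) / 4 := by
    rw [div_le_div_iff₀ hs (by norm_num : (0:ℝ) < 4)]
    have hsq : 8*(n:ℝ) ≤ (t+1)^2 := by nlinarith
    nlinarith [mul_le_mul_of_nonneg_left hsq hVt1]
  have h2V : V (t+1) ≤ 2 * V t := by linarith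
  refine ⟨h2V, ?_⟩
  have hC : 2*n*V (t+1) / (t+1)^2 ≤ 4*n*V t / t := by
    rw [div_le_div_iff₀ hs ht0]
    have hts : t ≤ (t+1)^2 := by nlinarith
    nlinarith [mul_le_mul_of_nonneg_left (mul_le_mul_of_nonneg_right h2V ht0.le)
        (show (0:ℝ) ≤ 2*(n:ℝ) by positivity),
      mul_nonneg (mul_nonneg (by positivity : (0:ℝ) ≤ 4*(n:ℝ)) hVt)
        (show (0:ℝ) ≤ (t+1)^2 - t by linarith)]
  have e : ((2:ℝ)^n + 4*n) * V t / t = 2^n * V t / t + 4*n*V t / t := by ring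
  rw [e]
  linarith
end
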